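/- Let f : ℝ̄ᵐ → ℝ̄ be monotone, order-concave, and strict (f(x) = −∞ whenever some component of x equals −∞), and let g : ℝ̄ⁿ → ℝ̄ᵐ be monotone and order-concave. Then f ∘ g : ℝ̄ⁿ → ℝ̄ is monotone and order-concave. -/

import Mathlib

/-!
Fix a selector `I` and a point `x` where `(f ∘ g)^{(I)}` is finite. Strictness of `f` rules out
`−∞` among the components of `a := g^{(I)}(x)`, so `a` is the argument of `f^{(J)}` at a real
vector `u`, where `J = topSelector a` fixes to `+∞` exactly the infinite components of `a`.
A finite component `a_j` puts `x` into the finite domain of `g_j^{(I)}`, which is then `< +∞`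
everywhere; an infinite one stays `+∞` above `x` because `g` is monotone. So for comparable
`x ≤ y` in the finite domain, `g^{(I)}(x)` and `g^{(I)}(y)` are arguments of `f^{(J)}` at real
vectors `u ≤ v`, and concavity of `f^{(J)}`, followed by monotonicity of `f` and concavity of the
finite components `g_j^{(I)}`, gives concavity of `(f ∘ g)^{(I)}`. The bound `< +∞` comes from
that of `f^{(J)}` in the same way, and order-convexity of the finite domain follows from the two.
-/

/-- Coercion of a real vector to an extended-real vector. -/
noncomputable def coer {ι : Type*} (x : ι → ℝ) : ι → EReal := fun i => (x i : EReal)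

/-- A selector `I : ι → Option Bool` fixes some coordinates to `−∞`
(`some false`) or `+∞` (`some true`) and leaves the others (`none`)
unchanged; `extApply I x` is the corresponding argument vector, so that
`f (extApply I (coer x)) = f^{(I)}(x)`. -/
noncomputable def extApply {ι : Type*} (I : ι → Option Bool) (x : ι → EReal) : ι → EReal :=
  fun i => match I i with
  | none => x i
  | some true => ⊤
  | some false => ⊥

/-- The finite domain of `f^{(I)}`: real argument vectors on which `f^{(I)}`
takes a real value. -/
def fdomI {ι : Type*} (f : (ι → EReal) → EReal) (I : ι → Option Bool) :
    Set (ι → ℝ) :=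
  {x | ∃ r : ℝ, f (extApply I (coer x)) = (r : EReal)}

/-- Order-convex set of real vectors. -/
def OrderConvexSet {ι : Type*} (S : Set (ι → ℝ)) : Prop :=
  ∀ x ∈ S, ∀ y ∈ S, (x ≤ y ∨ y ≤ x) → ∀ t : ℝ, 0 ≤ t → t ≤ 1 →
    t • x + (1 - t) • y ∈ S

/-- `f : ℝ̄ⁿ → ℝ̄` is order-concave: for every selector `I`, the set
`fdomI f I` is order-convex, `f^{(I)}` is order-concave on it, and if it is
nonempty then `f^{(I)} < +∞` on all of ℝⁿ. -/
def OrderConcaveE {ι : Type*} (f : (ι → EReal) → EReal) : Prop :=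
  ∀ I : ι → Option Bool,
    OrderConvexSet (fdomI f I) ∧
    (∀ x ∈ fdomI f I, ∀ y ∈ fdomI f I, x ≤ y → ∀ t : ℝ, 0 ≤ t → t ≤ 1 →
      (t : EReal) * f (extApply I (coer x)) +
        ((1 - t : ℝ) : EReal) * f (extApply I (coer y)) ≤
        f (extApply I (coer (t • x + (1 - t) • y)))) ∧
    ((fdomI f I).Nonempty → ∀ x : ι → ℝ, f (extApply I (coer x)) < ⊤)

/-- `f : ℝ̄ⁿ → ℝ̄` is order-convex (dual definition). -/
def OrderConvexE {ι : Type*} (f : (ι → EReal) → EReal) : Prop :=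
  ∀ I : ι → Option Bool,
    OrderConvexSet (fdomI f I) ∧
    (∀ x ∈ fdomI f I, ∀ y ∈ fdomI f I, x ≤ y → ∀ t : ℝ, 0 ≤ t → t ≤ 1 →
      f (extApply I (coer (t • x + (1 - t) • y))) ≤
        (t : EReal) * f (extApply I (coer x)) +
          ((1 - t : ℝ) : EReal) * f (extApply I (coer y))) ∧
    ((fdomI f I).Nonempty → ∀ x : ι → ℝ, ⊥ < f (extApply I (coer x)))

/-- `f : ℝ̄ⁿ → ℝ̄` is concave: like `OrderConcaveE` but for all (not only
comparable) pairs, with convex finite domains. -/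
def ConcaveE {ι : Type*} (f : (ι → EReal) → EReal) : Prop :=
  ∀ I : ι → Option Bool,
    Convex ℝ (fdomI f I) ∧
    (∀ x ∈ fdomI f I, ∀ y ∈ fdomI f I, ∀ t : ℝ, 0 ≤ t → t ≤ 1 →
      (t : EReal) * f (extApply I (coer x)) +
        ((1 - t : ℝ) : EReal) * f (extApply I (coer y)) ≤
        f (extApply I (coer (t • x + (1 - t) • y)))) ∧
    ((fdomI f I).Nonempty → ∀ x : ι → ℝ, f (extApply I (coer x)) < ⊤)

/-- `f : ℝ̄ⁿ → ℝ̄` is convex (dual definition). -/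
def ConvexE {ι : Type*} (f : (ι → EReal) → EReal) : Prop :=
  ∀ I : ι → Option Bool,
    Convex ℝ (fdomI f I) ∧
    (∀ x ∈ fdomI f I, ∀ y ∈ fdomI f I, ∀ t : ℝ, 0 ≤ t → t ≤ 1 →
      f (extApply I (coer (t • x + (1 - t) • y))) ≤
        (t : EReal) * f (extApply I (coer x)) +
          ((1 - t : ℝ) : EReal) * f (extApply I (coer y))) ∧
    ((fdomI f I).Nonempty → ∀ x : ι → ℝ, ⊥ < f (extApply I (coer x)))

/-- A vector-valued function on extended reals is order-concave iff each
component is. -/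
def OrderConcaveEVec {ι κ : Type*} (f : (ι → EReal) → κ → EReal) : Prop :=
  ∀ j : κ, OrderConcaveE (fun x => f x j)

/-- `f : ℝ̄ᵐ → ℝ̄` is strict: it takes the value `−∞` whenever some argument
component is `−∞`. -/
def StrictE {ι : Type*} (f : (ι → EReal) → EReal) : Prop :=
  ∀ x : ι → EReal, (∃ k, x k = ⊥) → f x = ⊥

open Classical in
noncomputable def topSelector {ι : Type*} (a : ι → EReal) : ι → Option Bool :=
  fun j => if a j = ⊤ then some true else none

section Selectors

variable {ι : Type*}

lemma coer_monotone : Monotone (coer : (ι → ℝ) → ι → EReal) :=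
  fun _ _ hab i => EReal.coe_le_coe_iff.2 (hab i)

lemma extApply_monotone (I : ι → Option Bool) : Monotone (extApply I) := by
  intro a b hab i
  simp only [extApply]
  rcases I i with _ | _ | _
  exacts [hab i, le_rfl, le_rfl]

lemma mem_fdomI_iff {h : (ι → EReal) → EReal} {I : ι → Option Bool} {x : ι → ℝ} :
    x ∈ fdomI h I ↔ h (extApply I (coer x)) ≠ ⊥ ∧ h (extApply I (coer x)) ≠ ⊤ := by
  constructor
  · rintro ⟨r, hr⟩
    rw [hr]
    exact ⟨EReal.coe_ne_bot r, EReal.coe_ne_top r⟩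
  · rintro ⟨hbot, htop⟩
    exact ⟨_, (EReal.coe_toReal htop hbot).symm⟩

lemma extApply_topSelector_of_eq_top {a : ι → EReal} {j : ι} (ha : a j = ⊤) (x : ι → EReal) :
    extApply (topSelector a) x j = ⊤ := by
  simp [extApply, topSelector, ha]

lemma extApply_topSelector_of_ne_top {a : ι → EReal} {j : ι} (ha : a j ≠ ⊤) (x : ι → EReal) :
    extApply (topSelector a) x j = x j := by
  simp [extApply, topSelector, ha]

lemma le_extApply_topSelector {a b : ι → EReal} (h : ∀ j, a j ≠ ⊤ → b j ≠ ⊤) :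
    b ≤ extApply (topSelector a) (coer fun j => (b j).toReal) := by
  intro j
  by_cases ha : a j = ⊤
  · simp [extApply_topSelector_of_eq_top ha]
  · rw [extApply_topSelector_of_ne_top ha]
    exact EReal.le_coe_toReal (h j ha)

lemma extApply_topSelector_eq {a b : ι → EReal} (hb : ∀ j, b j ≠ ⊥)
    (htop : ∀ j, a j = ⊤ → b j = ⊤) (hfin : ∀ j, a j ≠ ⊤ → b j ≠ ⊤) :
    extApply (topSelector a) (coer fun j => (b j).toReal) = b := by
  funext j
  by_cases ha : a j = ⊤
  · rw [extApply_topSelector_of_eq_top ha, htop j ha]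
  · rw [extApply_topSelector_of_ne_top ha]
    exact EReal.coe_toReal (hfin j ha) (hb j)

end Selectors

section OrderConcave

variable {ι : Type*} {h : (ι → EReal) → EReal} {I : ι → Option Bool}

lemma orderConvexSet_fdomI
    (hconc : ∀ x ∈ fdomI h I, ∀ y ∈ fdomI h I, x ≤ y → ∀ t : ℝ, 0 ≤ t → t ≤ 1 →
      (t : EReal) * h (extApply I (coer x)) + ((1 - t : ℝ) : EReal) * h (extApply I (coer y)) ≤
        h (extApply I (coer (t • x + (1 - t) • y))))
    (htop : (fdomI h I).Nonempty → ∀ x : ι → ℝ, h (extApply I (coer x)) < ⊤) :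
    OrderConvexSet (fdomI h I) := by
  have key : ∀ x ∈ fdomI h I, ∀ y ∈ fdomI h I, x ≤ y → ∀ t : ℝ, 0 ≤ t → t ≤ 1 →
      t • x + (1 - t) • y ∈ fdomI h I := by
    intro x hx y hy hxy t ht0 ht1
    refine mem_fdomI_iff.2 ⟨?_, (htop ⟨x, hx⟩ _).ne⟩
    have hle := hconc x hx y hy hxy t ht0 ht1
    obtain ⟨r, hr⟩ := hx
    obtain ⟨s, hs⟩ := hy
    rw [hr, hs, ← EReal.coe_mul, ← EReal.coe_mul, ← EReal.coe_add] at hle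
    exact ne_bot_of_le_ne_bot (EReal.coe_ne_bot _) hle
  rintro x hx y hy (hxy | hyx) t ht0 ht1
  · exact key x hx y hy hxy t ht0 ht1
  · have hmem := key y hy x hx hyx (1 - t) (by linarith) (by linarith)
    rwa [sub_sub_cancel, add_comm] at hmem

lemma OrderConcaveE.of_le_of_lt_top
    (hconc : ∀ I, ∀ x ∈ fdomI h I, ∀ y ∈ fdomI h I, x ≤ y → ∀ t : ℝ, 0 ≤ t → t ≤ 1 →
      (t : EReal) * h (extApply I (coer x)) + ((1 - t : ℝ) : EReal) * h (extApply I (coer y)) ≤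
        h (extApply I (coer (t • x + (1 - t) • y))))
    (htop : ∀ I, (fdomI h I).Nonempty → ∀ x : ι → ℝ, h (extApply I (coer x)) < ⊤) :
    OrderConcaveE h :=
  fun I => ⟨orderConvexSet_fdomI (hconc I) (htop I), hconc I, htop I⟩

lemma StrictE.ne_bot_of_ne_bot (hs : StrictE h) {a : ι → EReal} (ha : h a ≠ ⊥) (j : ι) :
    a j ≠ ⊥ :=
  fun hj => ha (hs a ⟨j, hj⟩)

end OrderConcave

section Composition

variable {ι κ : Type*} {f : (κ → EReal) → EReal} {g : (ι → EReal) → κ → EReal}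
  {I : ι → Option Bool} {x : ι → ℝ}

lemma mem_fdomI_component_of_mem_fdomI_comp (hfstrict : StrictE f)
    (hx : x ∈ fdomI (fun w => f (g w)) I) {j : κ} (hj : g (extApply I (coer x)) j ≠ ⊤) :
    x ∈ fdomI (fun w => g w j) I :=
  mem_fdomI_iff.2 ⟨hfstrict.ne_bot_of_ne_bot (mem_fdomI_iff.1 hx).1 j, hj⟩

lemma component_lt_top_of_mem_fdomI_comp (hfstrict : StrictE f) (hgconc : OrderConcaveEVec g)
    (hx : x ∈ fdomI (fun w => f (g w)) I) {j : κ} (hj : g (extApply I (coer x)) j ≠ ⊤)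
    (w : ι → ℝ) : g (extApply I (coer w)) j < ⊤ :=
  (hgconc j I).2.2 ⟨x, mem_fdomI_component_of_mem_fdomI_comp hfstrict hx hj⟩ w

lemma extApply_topSelector_toReal_of_le (hfstrict : StrictE f) (hgmono : Monotone g)
    (hgconc : OrderConcaveEVec g) {y : ι → ℝ} (hx : x ∈ fdomI (fun w => f (g w)) I)
    (hy : y ∈ fdomI (fun w => f (g w)) I) (hxy : x ≤ y) :
    extApply (topSelector (g (extApply I (coer x))))
        (coer fun j => (g (extApply I (coer y)) j).toReal) = g (extApply I (coer y)) :=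
  extApply_topSelector_eq (hfstrict.ne_bot_of_ne_bot (mem_fdomI_iff.1 hy).1)
    (fun j hj => top_le_iff.1 (hj ▸ hgmono (extApply_monotone I (coer_monotone hxy)) j))
    (fun _ hj => (component_lt_top_of_mem_fdomI_comp hfstrict hgconc hx hj y).ne)

lemma toReal_mem_fdomI_topSelector_of_le (hfstrict : StrictE f) (hgmono : Monotone g)
    (hgconc : OrderConcaveEVec g) {y : ι → ℝ} (hx : x ∈ fdomI (fun w => f (g w)) I)
    (hy : y ∈ fdomI (fun w => f (g w)) I) (hxy : x ≤ y) :
    (fun j => (g (extApply I (coer y)) j).toReal) ∈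
      fdomI f (topSelector (g (extApply I (coer x)))) := by
  rw [mem_fdomI_iff, extApply_topSelector_toReal_of_le hfstrict hgmono hgconc hx hy hxy]
  exact mem_fdomI_iff.1 hy

lemma comp_lt_top (hfmono : Monotone f) (hfconc : OrderConcaveE f) (hfstrict : StrictE f)
    (hgmono : Monotone g) (hgconc : OrderConcaveEVec g)
    (hne : (fdomI (fun w => f (g w)) I).Nonempty)
    (w : ι → ℝ) : f (g (extApply I (coer w))) < ⊤ := by
  obtain ⟨x, hx⟩ := hne
  set J := topSelector (g (extApply I (coer x)))
  calc f (g (extApply I (coer w)))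
      ≤ f (extApply J (coer fun j => (g (extApply I (coer w)) j).toReal)) :=
        hfmono <| le_extApply_topSelector fun j hj =>
          (component_lt_top_of_mem_fdomI_comp hfstrict hgconc hx hj w).ne
    _ < ⊤ := (hfconc J).2.2
        ⟨_, toReal_mem_fdomI_topSelector_of_le hfstrict hgmono hgconc hx hx le_rfl⟩ _

lemma comp_concave (hfmono : Monotone f) (hfconc : OrderConcaveE f) (hfstrict : StrictE f)
    (hgmono : Monotone g) (hgconc : OrderConcaveEVec g) {y : ι → ℝ}
    (hx : x ∈ fdomI (fun w => f (g w)) I) (hy : y ∈ fdomI (fun w => f (g w)) I)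
    (hxy : x ≤ y) {t : ℝ} (ht0 : 0 ≤ t) (ht1 : t ≤ 1) :
    (t : EReal) * f (g (extApply I (coer x))) +
        ((1 - t : ℝ) : EReal) * f (g (extApply I (coer y))) ≤
      f (g (extApply I (coer (t • x + (1 - t) • y)))) := by
  set z := t • x + (1 - t) • y
  set a := g (extApply I (coer x))
  set b := g (extApply I (coer y))
  set u : κ → ℝ := fun j => (a j).toReal
  set v : κ → ℝ := fun j => (b j).toReal
  have hxz : x ≤ z := fun i => by
    simp only [z, Pi.add_apply, Pi.smul_apply, smul_eq_mul]
    nlinarith [hxy i]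
  have hab : a ≤ b := hgmono (extApply_monotone I (coer_monotone hxy))
  have haz : a ≤ g (extApply I (coer z)) := hgmono (extApply_monotone I (coer_monotone hxz))
  have hu : extApply (topSelector a) (coer u) = a :=
    extApply_topSelector_toReal_of_le hfstrict hgmono hgconc hx hx le_rfl
  have hv : extApply (topSelector a) (coer v) = b :=
    extApply_topSelector_toReal_of_le hfstrict hgmono hgconc hx hy hxy
  have hua : ∀ j, a j ≠ ⊤ → (u j : EReal) = a j := fun j hj => by
    simpa only [extApply_topSelector_of_ne_top hj, coer] using congrFun hu j
  have hvb : ∀ j, a j ≠ ⊤ → (v j : EReal) = b j := fun j hj => by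
    simpa only [extApply_topSelector_of_ne_top hj, coer] using congrFun hv j
  have huv : u ≤ v := fun j => by
    by_cases hj : a j = ⊤
    · simp only [u, v, hj, top_le_iff.1 (hj ▸ hab j), EReal.toReal_top, le_refl]
    · exact EReal.coe_le_coe_iff.1 (hua j hj ▸ hvb j hj ▸ hab j)
  have hf := (hfconc _).2.1 u
    (toReal_mem_fdomI_topSelector_of_le hfstrict hgmono hgconc hx hx le_rfl) v
    (toReal_mem_fdomI_topSelector_of_le hfstrict hgmono hgconc hx hy hxy) huv t ht0 ht1
  rw [hu, hv] at hf
  refine hf.trans (hfmono fun j => ?_)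
  by_cases hj : a j = ⊤
  · rw [extApply_topSelector_of_eq_top hj, ← hj]
    exact haz j
  · have hbj : b j ≠ ⊤ := (hvb j hj).symm.trans_ne (EReal.coe_ne_top _)
    have hg := (hgconc j I).2.1 x (mem_fdomI_component_of_mem_fdomI_comp hfstrict hx hj)
      y (mem_fdomI_component_of_mem_fdomI_comp hfstrict hy hbj) hxy t ht0 ht1
    calc extApply (topSelector a) (coer (t • u + (1 - t) • v)) j
        = (t : EReal) * a j + ((1 - t : ℝ) : EReal) * b j := by
          rw [extApply_topSelector_of_ne_top hj, ← hua j hj, ← hvb j hj]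
          simp [coer]
      _ ≤ g (extApply I (coer z)) j := hg

end Composition

/-- If `f : ℝ̄ᵐ → ℝ̄` is monotone, order-concave and strict,
and `g : ℝ̄ⁿ → ℝ̄ᵐ` is monotone and order-concave, then `f ∘ g` is monotone
and order-concave. -/
theorem comp_morcave_strict {n m : ℕ}
    (f : (Fin m → EReal) → EReal) (g : (Fin n → EReal) → Fin m → EReal)
    (hfmono : Monotone f) (hfconc : OrderConcaveE f) (hfstrict : StrictE f)
    (hgmono : Monotone g) (hgconc : OrderConcaveEVec g) :
    Monotone (fun x => f (g x)) ∧ OrderConcaveE (fun x => f (g x)) :=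
  ⟨hfmono.comp hgmono,
    OrderConcaveE.of_le_of_lt_top
      (fun _ _ hx _ hy hxy _ ht0 ht1 =>
        comp_concave hfmono hfconc hfstrict hgmono hgconc hx hy hxy ht0 ht1)
      (fun _ hne => comp_lt_top hfmono hfconc hfstrict hgmono hgconc hne)⟩
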